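/- If u satisfies (φ u)' = ψ u and u_k = φ^k u, then for any polynomial p, d/dx [p u_k] = (φ p' + (ψ + (k-1) φ') p) u_{k-1} for k ≥ 1; i.e., the Rodrigues operator R_1 applied at level k maps p to φ p' + (ψ + (k-1) φ') p. -/

import Mathlib

open Polynomial

/-- Distributional derivative of a linear functional: `⟨u', p⟩ = -⟨u, p'⟩`. -/
noncomputable def fD (u : Polynomial ℝ →ₗ[ℝ] ℝ) : Polynomial ℝ →ₗ[ℝ] ℝ :=
  -(u ∘ₗ (derivative : Polynomial ℝ →ₗ[ℝ] Polynomial ℝ))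

/-- Multiplication of a functional by a polynomial: `⟨Q u, p⟩ = ⟨u, Q p⟩`. -/
noncomputable def pmul (Q : Polynomial ℝ) (u : Polynomial ℝ →ₗ[ℝ] ℝ) :
    Polynomial ℝ →ₗ[ℝ] ℝ :=
  u ∘ₗ (LinearMap.mulLeft ℝ Q)

/-!
Write `p u_k = (p φ^(k-1)) (φ u)`. By the Leibniz rule for the distributional derivative and
Pearson's equation, `(p u_k)' = (p φ^(k-1))' φ u + p φ^(k-1) ψ u`, and
`φ (φ^(k-1))' = (k-1) φ' φ^(k-1)` collects both terms into a multiple of `u_{k-1}`.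
-/

@[simp]
lemma fD_apply (u : Polynomial ℝ →ₗ[ℝ] ℝ) (r : Polynomial ℝ) : fD u r = -u (derivative r) :=
  rfl

@[simp]
lemma pmul_apply (Q : Polynomial ℝ) (u : Polynomial ℝ →ₗ[ℝ] ℝ) (r : Polynomial ℝ) :
    pmul Q u r = u (Q * r) :=
  rfl

lemma pmul_pmul (P Q : Polynomial ℝ) (u : Polynomial ℝ →ₗ[ℝ] ℝ) :
    pmul P (pmul Q u) = pmul (P * Q) u :=
  LinearMap.ext fun r => by simp only [pmul_apply]; ring_nf

lemma pmul_add (P Q : Polynomial ℝ) (u : Polynomial ℝ →ₗ[ℝ] ℝ) :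
    pmul (P + Q) u = pmul P u + pmul Q u :=
  LinearMap.ext fun r => by simp [add_mul]

lemma fD_pmul (Q : Polynomial ℝ) (u : Polynomial ℝ →ₗ[ℝ] ℝ) :
    fD (pmul Q u) = pmul (derivative Q) u + pmul Q (fD u) :=
  LinearMap.ext fun r => by simp [derivative_mul]

lemma mul_derivative_pow {R : Type*} [CommSemiring R] (φ : R[X]) (m : ℕ) :
    φ * derivative (φ ^ m) = C (m : R) * derivative φ * φ ^ m := by
  cases m with
  | zero => simp
  | succ n =>
    rw [derivative_pow]
    push_cast
    ring

theorem stmt_5_general (φ ψ : Polynomial ℝ)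
    (u : Polynomial ℝ →ₗ[ℝ] ℝ)
    (hPearson : fD (pmul φ u) = pmul ψ u)
    (k : ℕ) (hk : 1 ≤ k) (p : Polynomial ℝ) :
    fD (pmul p (pmul (φ ^ k) u))
      = pmul (φ * derivative p + (ψ + C ((k : ℝ) - 1) * derivative φ) * p)
          (pmul (φ ^ (k - 1)) u) := by
  obtain ⟨m, rfl⟩ : ∃ m, k = m + 1 := ⟨k - 1, (Nat.sub_add_cancel hk).symm⟩
  calc fD (pmul p (pmul (φ ^ (m + 1)) u))
      = fD (pmul (p * φ ^ m) (pmul φ u)) := by rw [pmul_pmul, pmul_pmul, pow_succ, mul_assoc]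
    _ = pmul (derivative (p * φ ^ m) * φ + p * φ ^ m * ψ) u := by
      rw [fD_pmul, hPearson, pmul_pmul, pmul_pmul, pmul_add]
    _ = _ := by
      rw [pmul_pmul, Nat.add_sub_cancel, derivative_mul, Nat.cast_succ, add_sub_cancel_right]
      congr 1
      linear_combination p * mul_derivative_pow φ m

/-- `d/dx[p u_k] = (φ p' + (ψ + (k-1) φ') p) u_{k-1}` for `k ≥ 1`,
i.e. the Rodrigues operator at level `k` maps `p` to `φ p' + (ψ + (k-1) φ') p`. -/
theorem stmt_5 (φ ψ : Polynomial ℝ) (hφ : φ.natDegree ≤ 2) (hψ : ψ.degree = 1)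
    (u : Polynomial ℝ →ₗ[ℝ] ℝ)
    (hPearson : fD (pmul φ u) = pmul ψ u)
    (k : ℕ) (hk : 1 ≤ k) (p : Polynomial ℝ) :
    fD (pmul p (pmul (φ ^ k) u))
      = pmul (φ * derivative p + (ψ + C ((k : ℝ) - 1) * derivative φ) * p)
          (pmul (φ ^ (k - 1)) u) :=
  stmt_5_general φ ψ u hPearson k hk p
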